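/- arXiv:1207.2008 — 2 statements merged into one kernel-verified Lean document; each statement's English description precedes it below -/
import Mathlib

section
/- For every n ≥ 1, the number of up-down permutations σ of length 2n+1 with mmp^{(1,0,∅,0)}(σ) = 1 equals (number of up-down permutations of length 2n) + (number of up-down permutations of length 2n−1). (Equivalently, the coefficient of x in B^{(1,0,∅,0)}_{2n+1}(x) is A_{2n}(1) + B_{2n−1}(1).) -/
/-- A permutation `σ` of `{1,…,n}` (as a permutation of `Fin n`) is up-down if
`σ_1 < σ_2 > σ_3 < σ_4 > ⋯`. -/
def UpDown {n : ℕ} (σ : Equiv.Perm (Fin n)) : Prop :=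
  ∀ i : Fin n, ∀ h : i.val + 1 < n,
    if Even i.val then σ i < σ ⟨i.val + 1, h⟩ else σ ⟨i.val + 1, h⟩ < σ i

/-- A permutation is down-up if `σ_1 > σ_2 < σ_3 > σ_4 < ⋯`. -/
def DownUp {n : ℕ} (σ : Equiv.Perm (Fin n)) : Prop :=
  ∀ i : Fin n, ∀ h : i.val + 1 < n,
    if Even i.val then σ ⟨i.val + 1, h⟩ < σ i else σ i < σ ⟨i.val + 1, h⟩

/-- `σ_i` matches `MMP(1,0,∅,0)`: there exists `j > i` with `σ_j > σ_i` and
there is no `j < i` with `σ_j < σ_i`. -/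
def Matches1 {n : ℕ} (σ : Equiv.Perm (Fin n)) (i : Fin n) : Prop :=
  (∃ j, i < j ∧ σ i < σ j) ∧ ¬ ∃ j, j < i ∧ σ j < σ i

/-- `mmp^{(1,0,∅,0)}(σ)`: the number of indices matching `MMP(1,0,∅,0)` in `σ`. -/
noncomputable def mmp1 {n : ℕ} (σ : Equiv.Perm (Fin n)) : ℕ :=
  {i : Fin n | Matches1 σ i}.ncard

/-- The number of up-down permutations of length `m`. -/
noncomputable def UDcount (m : ℕ) : ℕ := {σ : Equiv.Perm (Fin m) | UpDown σ}.ncard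

/-!
Position 0 of an up-down permutation always matches, and every other matching position is a
left-to-right minimum other than the last position. Conversely, if some entry before the last
position is smaller than `σ 0`, the leftmost minimum of `σ` up to that position matches. Hence
`mmp1 σ = 1` exactly when every entry smaller than `σ 0` is in the last position, i.e. when
`σ 0 = 0`, or when `σ 0 = 1` and `σ` ends in `0`. Removing the entry `0` (and in the second case
also the entry `1`) and lowering the remaining values gives down-up permutations of lengths `2n`
and `2n - 1`, and complementation turns these into up-down permutations.
-/

open Equiv

section Alternating

variable {N : ℕ} {σ : Perm (Fin N)}

theorem upDown_iff : UpDown σ ↔ ∀ a b : Fin N, (b : ℕ) = a + 1 →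
    if Even (a : ℕ) then σ a < σ b else σ b < σ a := by
  refine ⟨fun h a ⟨b, hb⟩ hab => ?_, fun h a hb => h a _ rfl⟩
  obtain rfl : b = a + 1 := hab
  exact h a hb

theorem downUp_iff : DownUp σ ↔ ∀ a b : Fin N, (b : ℕ) = a + 1 →
    if Even (a : ℕ) then σ b < σ a else σ a < σ b := by
  refine ⟨fun h a ⟨b, hb⟩ hab => ?_, fun h a hb => h a _ rfl⟩
  obtain rfl : b = a + 1 := hab
  exact h a hb

theorem downUp_iff_upDown_revPerm_mul : DownUp σ ↔ UpDown (Fin.revPerm * σ) := by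
  simp only [DownUp, UpDown, Perm.mul_apply, Fin.revPerm_apply, Fin.rev_lt_rev]

theorem ncard_setOf_downUp : {σ : Perm (Fin N) | DownUp σ}.ncard = UDcount N := by
  rw [UDcount, ← Nat.card_coe_set_eq, ← Nat.card_coe_set_eq]
  exact Nat.card_congr <|
    (Equiv.mulLeft Fin.revPerm).subtypeEquiv fun _ => downUp_iff_upDown_revPerm_mul

end Alternating

section ConsZero

variable {m : ℕ}

def consZero (τ : Perm (Fin m)) : Perm (Fin (m + 1)) := Perm.decomposeFin.symm (0, τ)

@[simp] theorem consZero_apply_zero (τ : Perm (Fin m)) : consZero τ 0 = 0 :=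
  Perm.decomposeFin_symm_apply_zero _ _

@[simp] theorem consZero_apply_succ (τ : Perm (Fin m)) (i : Fin m) :
    consZero τ i.succ = (τ i).succ := by
  simp [consZero, Perm.decomposeFin_symm_apply_succ]

theorem consZero_injective : Function.Injective (consZero (m := m)) :=
  fun _ _ h => congrArg Prod.snd (Perm.decomposeFin.symm.injective h)

theorem range_consZero : Set.range (consZero (m := m)) = {σ | σ 0 = 0} := by
  ext σ
  refine ⟨by rintro ⟨τ, rfl⟩; exact consZero_apply_zero τ,
    fun h => ⟨(Perm.decomposeFin σ).2, ?_⟩⟩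
  have hfst := Perm.decomposeFin_symm_apply_zero (Perm.decomposeFin σ).1 (Perm.decomposeFin σ).2
  rw [Prod.mk.eta, symm_apply_apply, h] at hfst
  rw [consZero, hfst, Prod.mk.eta, symm_apply_apply]

theorem upDown_consZero_iff {τ : Perm (Fin m)} : UpDown (consZero τ) ↔ DownUp τ := by
  simp only [upDown_iff, downUp_iff, Fin.forall_fin_succ, Fin.val_zero, Fin.val_succ,
    consZero_apply_zero, consZero_apply_succ, Fin.succ_lt_succ_iff, Fin.succ_pos, not_lt_zero,
    Nat.even_add_one, ite_not, Nat.add_right_cancel_iff, Nat.right_eq_add, Nat.add_eq_zero_iff,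
    one_ne_zero, and_false, false_imp_iff, Even.zero, if_true, implies_true, true_and]

end ConsZero

section SnocZero

variable {m : ℕ}

def snocZero (ρ : Perm (Fin m)) : Perm (Fin (m + 1)) := consZero ρ * finRotate (m + 1)

@[simp] theorem snocZero_apply_last (ρ : Perm (Fin m)) : snocZero ρ (Fin.last m) = 0 := by
  simp [snocZero]

@[simp] theorem snocZero_apply_castSucc (ρ : Perm (Fin m)) (i : Fin m) :
    snocZero ρ i.castSucc = (ρ i).succ := by
  simp [snocZero, Fin.coeSucc_eq_succ]

@[simp] theorem snocZero_apply_zero (ρ : Perm (Fin (m + 1))) : snocZero ρ 0 = (ρ 0).succ :=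
  snocZero_apply_castSucc ρ 0

theorem snocZero_injective : Function.Injective (snocZero (m := m)) :=
  fun _ _ h => consZero_injective (mul_right_cancel h)

theorem range_snocZero : Set.range (snocZero (m := m)) = {σ | σ (Fin.last m) = 0} := by
  ext σ
  refine ⟨by rintro ⟨ρ, rfl⟩; exact snocZero_apply_last ρ, fun h => ?_⟩
  obtain ⟨ρ, hρ⟩ : σ * (finRotate (m + 1))⁻¹ ∈ Set.range consZero := by
    rw [range_consZero, Set.mem_ofPred_eq, Perm.mul_apply,
      Perm.inv_eq_iff_eq.2 finRotate_last.symm, h]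
  exact ⟨ρ, by rw [snocZero, hρ, inv_mul_cancel_right]⟩

theorem upDown_snocZero_iff (hm : Even m) {ρ : Perm (Fin m)} :
    UpDown (snocZero ρ) ↔ UpDown ρ := by
  have hlast (a : Fin m) (ha : m = a + 1) : Odd (a : ℕ) := by
    rwa [ha, Nat.even_add_one, Nat.not_even_iff_odd] at hm
  simp only [upDown_iff, Fin.forall_fin_succ', Fin.val_castSucc, snocZero_apply_castSucc,
    Fin.val_last, snocZero_apply_last, not_lt_zero, if_false_left, Nat.not_even_iff_odd,
    Fin.succ_lt_succ_iff, Fin.succ_pos, and_true, if_false_right, Nat.left_eq_add, one_ne_zero,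
    lt_self_iff_false, and_false, imp_self]
  exact ⟨fun h a => (h.1 a).1, fun h => ⟨fun a => ⟨h a, hlast a⟩, fun _ _ => hm⟩⟩

end SnocZero

section Matches

variable {n : ℕ} {σ : Perm (Fin (n + 2))}

theorem UpDown.matches1_zero (hσ : UpDown σ) : Matches1 σ 0 := by
  refine ⟨⟨1, Fin.zero_lt_one, ?_⟩, fun ⟨j, hj, _⟩ => Fin.not_lt_zero j hj⟩
  simpa using upDown_iff.1 hσ 0 1 (by simp)

theorem Matches1.apply_lt_apply_zero {i : Fin (n + 2)} (h : Matches1 σ i) (hi : i ≠ 0) :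
    σ i < σ 0 :=
  (not_lt.1 fun h0 => h.2 ⟨0, Fin.pos_iff_ne_zero.2 hi, h0⟩).lt_of_ne (σ.injective.ne hi)

theorem Matches1.ne_last {i : Fin (n + 2)} (h : Matches1 σ i) : i ≠ Fin.last _ := by
  obtain ⟨j, hij, -⟩ := h.1
  exact (hij.trans_le (Fin.le_last j)).ne

theorem UpDown.exists_matches1_ne_zero (hσ : UpDown σ) {i : Fin (n + 2)} (hi : i ≠ Fin.last _)
    (h : σ i < σ 0) : ∃ k ≠ 0, Matches1 σ k := by
  obtain ⟨k, hki, hmin⟩ := (Finset.Iic i).exists_min_image σ ⟨i, Finset.mem_Iic.2 le_rfl⟩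
  simp only [Finset.mem_Iic] at hki hmin
  have hk0 : k ≠ 0 := by rintro rfl; exact (hmin i le_rfl).not_gt h
  have hstep := upDown_iff.1 hσ
  -- the minimum of an initial segment cannot sit right after an ascent
  have hk : Even (k : ℕ) := by
    by_contra hodd
    have hk_pos : 0 < (k : ℕ) := Nat.pos_of_ne_zero (Fin.val_ne_zero_iff.2 hk0)
    obtain ⟨j, hj⟩ : ∃ j : Fin (n + 2), (k : ℕ) = j + 1 :=
      ⟨⟨k - 1, by omega⟩, by simp; omega⟩
    have := hstep j k hj
    rw [if_pos (by rwa [hj, Nat.even_add_one, not_not] at hodd)] at this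
    exact this.not_ge (hmin j (by rw [Fin.le_iff_val_le_val]; omega))
  have hk_lt : (k : ℕ) + 1 < n + 2 := by
    have := Fin.val_lt_last hi
    rw [Fin.le_iff_val_le_val] at hki
    omega
  refine ⟨k, hk0, ⟨⟨k + 1, hk_lt⟩, Fin.lt_def.2 (Nat.lt_succ_self _), ?_⟩,
    fun ⟨j, hjk, hj⟩ => (hmin j (hjk.le.trans hki)).not_gt hj⟩
  simpa [hk] using hstep k ⟨k + 1, hk_lt⟩ rfl

theorem UpDown.mmp1_eq_one_iff (hσ : UpDown σ) :
    mmp1 σ = 1 ↔ ∀ i, σ i < σ 0 → i = Fin.last _ := by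
  rw [mmp1, Set.ncard_eq_one]
  constructor
  · rintro ⟨a, ha⟩ i hi
    by_contra hne
    obtain ⟨k, hk0, hk⟩ := hσ.exists_matches1_ne_zero hne hi
    have hu := (Set.eq_singleton_iff_unique_mem.1 ha).2
    exact hk0 ((hu k hk).trans (hu 0 hσ.matches1_zero).symm)
  · intro h
    refine ⟨0, Set.eq_singleton_iff_unique_mem.2 ⟨hσ.matches1_zero, fun k hk => ?_⟩⟩
    by_contra hk0
    exact hk.ne_last (h k (hk.apply_lt_apply_zero hk0))

theorem forall_apply_lt_apply_zero_imp_eq_last_iff :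
    (∀ i, σ i < σ 0 → i = Fin.last _) ↔
      σ 0 = 0 ∨ (σ 0 = 1 ∧ σ (Fin.last _) = 0) := by
  constructor
  · intro h
    by_cases h0 : σ 0 = 0
    · exact .inl h0
    have hpre (v) (hv : v < σ 0) : σ.symm v = Fin.last _ := h _ (by rwa [apply_symm_apply])
    have hlast : σ (Fin.last _) = 0 := by
      rw [← hpre 0 (Fin.pos_iff_ne_zero.2 h0), apply_symm_apply]
    refine .inr ⟨?_, hlast⟩
    by_contra h1
    have h1_lt : (1 : Fin (n + 2)) < σ 0 := by
      simp only [Fin.ext_iff, Fin.lt_def, Fin.val_zero, Fin.val_one] at h0 h1 ⊢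
      omega
    exact zero_ne_one (σ.symm.injective ((hpre 0 (h1_lt.trans' Fin.zero_lt_one)).trans
      (hpre 1 h1_lt).symm))
  · rintro (h0 | ⟨h1, hlast⟩) i hi
    · rw [h0] at hi
      exact absurd hi (Fin.not_lt_zero _)
    · rw [h1, Fin.lt_one_iff] at hi
      exact σ.injective (hi.trans hlast.symm)

end Matches

section Count

variable {m : ℕ}

theorem ncard_setOf_upDown_apply_zero_eq_zero :
    {σ : Perm (Fin (m + 1)) | UpDown σ ∧ σ 0 = 0}.ncard = UDcount m := by
  rw [← ncard_setOf_downUp, ← Set.ncard_preimage_of_injective_subset_range consZero_injective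
    (range_consZero ▸ fun _ hσ => hσ.2)]
  congr 1
  ext τ
  change UpDown (consZero τ) ∧ consZero τ 0 = 0 ↔ DownUp τ
  rw [upDown_consZero_iff, consZero_apply_zero, and_iff_left rfl]

theorem ncard_setOf_upDown_apply_zero_eq_one (hm : Odd m) :
    {σ : Perm (Fin (m + 2)) | UpDown σ ∧ σ 0 = 1 ∧ σ (Fin.last _) = 0}.ncard =
      UDcount m := by
  rw [← ncard_setOf_upDown_apply_zero_eq_zero, ← Set.ncard_preimage_of_injective_subset_range
    snocZero_injective (range_snocZero ▸ fun _ hσ => hσ.2.2)]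
  congr 1
  ext ρ
  change UpDown (snocZero ρ) ∧ snocZero ρ 0 = 1 ∧ snocZero ρ (Fin.last _) = 0 ↔
    UpDown ρ ∧ ρ 0 = 0
  rw [upDown_snocZero_iff hm.add_one, snocZero_apply_zero, snocZero_apply_last,
    ← Fin.succ_zero_eq_one, Fin.succ_inj, and_iff_left rfl]

theorem ncard_setOf_upDown_mmp1_eq_one (hm : Odd m) :
    {σ : Perm (Fin (m + 2)) | UpDown σ ∧ mmp1 σ = 1}.ncard = UDcount (m + 1) + UDcount m := by
  have hsplit : {σ : Perm (Fin (m + 2)) | UpDown σ ∧ mmp1 σ = 1} =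
      {σ | UpDown σ ∧ σ 0 = 0} ∪ {σ | UpDown σ ∧ σ 0 = 1 ∧ σ (Fin.last _) = 0} := by
    ext σ
    show _ ∧ _ ↔ (_ ∧ _) ∨ (_ ∧ _)
    rw [← and_or_left]
    exact and_congr_right fun hσ =>
      hσ.mmp1_eq_one_iff.trans forall_apply_lt_apply_zero_imp_eq_last_iff
  have hdisj : Disjoint {σ : Perm (Fin (m + 2)) | UpDown σ ∧ σ 0 = 0}
      {σ | UpDown σ ∧ σ 0 = 1 ∧ σ (Fin.last _) = 0} :=
    Set.disjoint_left.2 fun _ h0 h1 => zero_ne_one (h0.2.symm.trans h1.2.1)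
  rw [hsplit, Set.ncard_union_eq hdisj, ncard_setOf_upDown_apply_zero_eq_zero,
    ncard_setOf_upDown_apply_zero_eq_one hm]

end Count

theorem stmt8 (n : ℕ) (hn : 1 ≤ n) :
    {σ : Equiv.Perm (Fin (2*n+1)) | UpDown σ ∧ mmp1 σ = 1}.ncard
      = UDcount (2*n) + UDcount (2*n - 1) := by
  obtain ⟨k, rfl⟩ := Nat.exists_eq_add_of_le' hn
  -- `2 * (k + 1) + 1`, `2 * (k + 1)`, `2 * (k + 1) - 1` unfold to `m + 2`, `m + 1`, `m`
  -- with `m = 2 * k + 1`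
  exact ncard_setOf_upDown_mmp1_eq_one (odd_two_mul_add_one k)
end

section
/- For every n ≥ 2, the number of up-down permutations σ of length 2n with mmp^{(1,0,∅,0)}(σ) = n−1 equals (2/3)·C(n,2)·(2n−1)!!, where C(n,2) = n(n−1)/2 is the binomial coefficient. (Equivalently, the coefficient of x^{n−1} in A^{(1,0,∅,0)}_{2n}(x) is (2/3)·C(n,2)·(2n−1)!!.) -/
/-- The odd double factorial `(2n−1)!! = ∏_{i=1}^{n} (2i−1)`. -/
def oddDF (n : ℕ) : ℕ := ∏ i ∈ Finset.range n, (2*i+1)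

/-- The even double factorial `(2n)!! = ∏_{i=1}^{n} 2i`. -/
def evenDF (n : ℕ) : ℕ := ∏ i ∈ Finset.range n, (2*i+2)

/-!
Read an up-down permutation `σ` of length `2n` from right to left: this gives a down-up list
`v₁ u₁ v₂ u₂ … vₙ uₙ`, and `σᵢ` matches `MMP(1,0,∅,0)` exactly when it is a left-to-right minimum
of `σ`, i.e. a suffix minimum of the reversed list. Only the valleys `u_k` can be suffix minima;
call the number of valleys that are not suffix minima the *deficit*, so `mmp = n - deficit`.

In a down-up enumeration of a finite set `s` the first valley `u₁` is a suffix minimum iff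
`u₁ = min s`. Then deleting the first pair leaves a down-up enumeration of the rest with the same
deficit; otherwise the deficit drops by one and the rest has to start above `u₁`. Consequently
deficit-`0` enumerations of a `2m`-set number `(2m-1)!!` (the peak `v₁` is free), those starting
above `b > min s` number `#{x ∈ s | b < x} · (2m-3)!!`, and the deficit-`1` counts satisfy
`B(m+2) = (2m+3) B(m+1) + ∑_{c < 2m+3} c (c-1) (2m-1)!!`, where `c` is the number of elements above
a non-minimal valley `u₁`; this solves to `B(m) = 2/3 · C(m,2) · (2m-1)!!`.
-/

open Finset

section Enumerations

variable {α : Type*} {s : Finset α} {l : List α} {a : α}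

def enumerations (s : Finset α) : Finset (List α) :=
  ⟨s.val.lists, Multiset.lists_nodup_finset s⟩

theorem mem_enumerations : l ∈ enumerations s ↔ s.val = l :=
  Multiset.mem_lists_iff _ _

theorem enumerations_empty : enumerations (∅ : Finset α) = {[]} := by
  ext l
  simp [mem_enumerations, eq_comm]

theorem mem_iff_of_mem_enumerations (hl : l ∈ enumerations s) : a ∈ l ↔ a ∈ s := by
  rw [mem_enumerations] at hl
  rw [← Finset.mem_val, hl, Multiset.mem_coe]

theorem length_of_mem_enumerations (hl : l ∈ enumerations s) : l.length = #s := by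
  rw [mem_enumerations] at hl
  rw [Finset.card, hl, Multiset.coe_card]

theorem mem_enumerations_iff_nodup : l ∈ enumerations s ↔ l.Nodup ∧ ∀ a, a ∈ l ↔ a ∈ s := by
  rw [mem_enumerations]
  constructor
  · intro h
    refine ⟨Multiset.coe_nodup.mp (h ▸ s.nodup), fun a => ?_⟩
    rw [← Multiset.mem_coe, ← h, Finset.mem_val]
  · rintro ⟨hl, hmem⟩
    exact (Multiset.Nodup.ext s.nodup (Multiset.coe_nodup.mpr hl)).mpr fun a => by simp [hmem]

variable [DecidableEq α]

theorem cons_mem_enumerations : a :: l ∈ enumerations s ↔ a ∈ s ∧ l ∈ enumerations (s.erase a) := by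
  simp only [mem_enumerations, Finset.erase_val, ← Multiset.cons_coe]
  constructor
  · intro h
    refine ⟨?_, by simp [h]⟩
    rw [← Finset.mem_val, h]
    exact Multiset.mem_cons_self _ _
  · rintro ⟨ha, h⟩
    rw [← h, Multiset.cons_erase ha]

theorem card_filter_enumerations (hs : s.Nonempty) (P : List α → Prop) [DecidablePred P] :
    #{l ∈ enumerations s | P l} = ∑ a ∈ s, #{l ∈ enumerations (s.erase a) | P (a :: l)} := by
  have hcons : {l ∈ enumerations s | P l} = s.biUnion fun a =>
      {l ∈ enumerations (s.erase a) | P (a :: l)}.map ⟨(a :: ·), List.cons_injective⟩ := by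
    ext (_ | ⟨b, l⟩)
    · simp [mem_enumerations, hs.ne_empty]
    · simp [cons_mem_enumerations, and_assoc]
  rw [hcons, card_biUnion]
  · simp
  · intro a _ b _ hab
    simp only [Function.onFun, Finset.disjoint_left, Finset.mem_map]
    rintro _ ⟨l, -, rfl⟩ ⟨l', -, h⟩
    exact hab (List.cons.inj h).1.symm

theorem card_filter_enumerations_of_two_le (hs : 2 ≤ #s) (P : List α → Prop) [DecidablePred P] :
    #{l ∈ enumerations s | P l} = ∑ u ∈ s, ∑ v ∈ s.erase u,
      #{r ∈ enumerations ((s.erase v).erase u) | P (v :: u :: r)} := by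
  rw [card_filter_enumerations (card_pos.mp (by omega))]
  rw [sum_congr rfl fun v hv => card_filter_enumerations (s := s.erase v) ?_ _]
  · exact sum_comm' fun v u => by simp only [mem_erase]; tauto
  · rw [← card_pos, card_erase_of_mem hv]
    omega

end Enumerations

section SumOverRanks

variable {α β : Type*} [LinearOrder α] [AddCommMonoid β]

theorem sum_card_filter_lt (S : Finset α) (f : ℕ → β) :
    ∑ u ∈ S, f #{x ∈ S | u < x} = ∑ k ∈ range #S, f k := by
  induction S using Finset.induction_on_min with
  | empty => simp
  | insert a S ha ih =>
    have haS : a ∉ S := fun h => lt_irrefl a (ha a h)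
    rw [sum_insert haS, card_insert_of_notMem haS, sum_range_succ, add_comm, filter_insert,
      if_neg (lt_irrefl a), filter_true_of_mem ha, ← ih]
    refine congrArg (· + _) (sum_congr rfl fun u hu => ?_)
    rw [filter_insert, if_neg (lt_asymm (ha u hu))]

end SumOverRanks

theorem sum_range_mul_pred (N : ℕ) :
    ∑ k ∈ range N, ((k * (k - 1) : ℕ) : ℚ) = N * (N - 1) * (N - 2) / 3 := by
  induction N with
  | zero => simp
  | succ N ih =>
    rw [sum_range_succ, ih]
    rcases N with _ | N
    · simp
    · push_cast [Nat.add_sub_cancel]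
      ring

theorem oddDF_succ (n : ℕ) : oddDF (n + 1) = (2 * n + 1) * oddDF n := by
  rw [oddDF, oddDF, prod_range_succ, mul_comm]

section DownUp

variable {α : Type*} [LinearOrder α]

def IsDownUp (l : List α) : Prop :=
  ∀ i (h : i + 1 < l.length), if Even i then l[i + 1] < l[i] else l[i] < l[i + 1]

def suffixMinCount (l : List α) : ℕ := #{i : Fin l.length | ∀ j, i < j → l[i] < l[j]}

theorem isDownUp_cons_cons {v u : α} {r : List α} :
    IsDownUp (v :: u :: r) ↔ u < v ∧ (∀ w ∈ r.head?, u < w) ∧ IsDownUp r := by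
  constructor
  · intro h
    refine ⟨by simpa using h 0 (by simp), ?_, fun i hi => ?_⟩
    · cases r with
      | nil => simp
      | cons w r =>
        have h1 := h 1 (by simp)
        rw [if_neg Nat.not_even_one] at h1
        simpa using h1
    · have h2 := h (i + 2) (by simp; omega)
      simp only [Nat.even_add, even_two, iff_true] at h2
      exact h2
  · rintro ⟨huv, hhead, hr⟩ (_ | _ | i) hi
    · simpa using huv
    · cases r with
      | nil => simp at hi
      | cons w r => simpa using hhead
    · simpa [Nat.even_add] using hr i (by simp at hi; omega)

theorem suffixMinCount_cons (a : α) (l : List α) :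
    suffixMinCount (a :: l) = suffixMinCount l + if ∀ w ∈ l, a < w then 1 else 0 := by
  simp only [suffixMinCount, card_filter, List.length_cons, Fin.sum_univ_succ]
  rw [add_comm]
  simp [Fin.forall_fin_succ, List.forall_mem_iff_getElem, Fin.forall_iff]

theorem suffixMinCount_ofFn {n : ℕ} (f : Fin n → α) :
    suffixMinCount (List.ofFn f) = #{i | ∀ j, i < j → f i < f j} :=
  card_equiv (finCongr List.length_ofFn) fun i => by
    simp only [mem_filter, mem_univ, true_and, Fin.forall_iff, Fin.lt_def, finCongr_apply,
      Fin.val_cast, Fin.getElem_fin, List.getElem_ofFn, List.length_ofFn]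
    rfl

theorem suffixMinCount_cons_cons {v u : α} (r : List α) (huv : u < v) :
    suffixMinCount (v :: u :: r) = suffixMinCount r + if ∀ w ∈ r, u < w then 1 else 0 := by
  have hv : ¬ ∀ w ∈ u :: r, v < w := fun h => lt_asymm huv (h u List.mem_cons_self)
  rw [suffixMinCount_cons, suffixMinCount_cons, if_neg hv, add_zero]

theorem suffixMinCount_pos {l : List α} (hl : l ≠ []) : 0 < suffixMinCount l := by
  have := List.length_pos_iff.mpr hl
  refine card_pos.mpr ⟨⟨l.length - 1, by omega⟩, mem_filter.mpr ⟨mem_univ _, fun j hj => ?_⟩⟩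
  have : l.length - 1 < j := hj
  exact absurd j.isLt (by omega)

theorem two_mul_suffixMinCount_le :
    ∀ {l : List α}, IsDownUp l → Even l.length → 2 * suffixMinCount l ≤ l.length
  | [], _, _ => by simp [suffixMinCount]
  | [_], _, h => by simp at h
  | v :: u :: r, hl, he => by
    obtain ⟨huv, -, hr⟩ := isDownUp_cons_cons.mp hl
    have ih := two_mul_suffixMinCount_le hr (by simpa [Nat.even_add] using he)
    rw [suffixMinCount_cons_cons r huv]
    simp only [List.length_cons]
    split_ifs <;> omega

open scoped Classical

-- `k` is the deficit: a list in `downUpLists s k` has `#s / 2 - k` suffix minima.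
noncomputable def downUpLists (s : Finset α) (k : ℕ) : Finset (List α) :=
  {l ∈ enumerations s | IsDownUp l ∧ 2 * (suffixMinCount l + k) = #s}

variable {s : Finset α} {k : ℕ} {m u v : α} {r : List α}

theorem IsLeast.lt_of_mem_erase (hm : IsLeast (s : Set α) m) (hu : u ∈ s.erase m) : m < u :=
  lt_of_le_of_ne (hm.2 (mem_of_mem_erase hu)) (ne_of_mem_erase hu).symm

theorem mem_downUpLists :
    r ∈ downUpLists s k ↔ r ∈ enumerations s ∧ IsDownUp r ∧ 2 * (suffixMinCount r + k) = #s := by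
  rw [downUpLists, mem_filter]

theorem downUpLists_empty : downUpLists (∅ : Finset α) 0 = {[]} := by
  ext r
  rw [mem_downUpLists, enumerations_empty, mem_singleton, and_iff_left_iff_imp]
  rintro rfl
  exact ⟨fun i hi => by simp at hi, by simp [suffixMinCount]⟩

theorem downUpLists_one_eq_empty (hs : #s ≤ 2) : downUpLists s 1 = ∅ := by
  refine eq_empty_of_forall_notMem fun r hr => ?_
  obtain ⟨hE, -, hcard⟩ := mem_downUpLists.mp hr
  have hne : r ≠ [] := by
    rintro rfl
    rw [← length_of_mem_enumerations hE] at hcard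
    simp at hcard
  have := suffixMinCount_pos hne
  omega

theorem cons_cons_min_mem_downUpLists_iff (hm : IsLeast (s : Set α) m) (hv : v ∈ s.erase m)
    (hr : r ∈ enumerations ((s.erase v).erase m)) :
    v :: m :: r ∈ downUpLists s k ↔ r ∈ downUpLists ((s.erase v).erase m) k := by
  have hmv : m < v := hm.lt_of_mem_erase hv
  have hmr : ∀ w ∈ r, m < w := fun w hw => by
    rw [mem_iff_of_mem_enumerations hr, erase_right_comm] at hw
    exact hm.lt_of_mem_erase (mem_of_mem_erase hw)
  have hE : v :: m :: r ∈ enumerations s := cons_mem_enumerations.mpr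
    ⟨mem_of_mem_erase hv, cons_mem_enumerations.mpr ⟨mem_erase.mpr ⟨hmv.ne, hm.1⟩, hr⟩⟩
  have hlen := length_of_mem_enumerations hE
  rw [List.length_cons, List.length_cons, length_of_mem_enumerations hr] at hlen
  have hhead : ∀ w ∈ r.head?, m < w := fun w hw => hmr w (List.mem_of_mem_head? hw)
  simp only [mem_downUpLists, isDownUp_cons_cons, suffixMinCount_cons_cons r hmv, if_pos hmr,
    hE, hr, hmv, true_and, and_iff_right hhead, ← hlen]
  exact and_congr_right fun _ => by omega

theorem cons_cons_mem_downUpLists_succ_iff (hm : IsLeast (s : Set α) m) (hu : u ∈ s.erase m)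
    (hv : v ∈ s.erase u) (hr : r ∈ enumerations ((s.erase v).erase u)) :
    v :: u :: r ∈ downUpLists s (k + 1) ↔
      u < v ∧ (∀ w ∈ r.head?, u < w) ∧ r ∈ downUpLists ((s.erase v).erase u) k := by
  by_cases huv : u < v
  · have hmu : m < u := hm.lt_of_mem_erase hu
    have hmr : m ∈ r := by
      rw [mem_iff_of_mem_enumerations hr]
      exact mem_erase.mpr ⟨hmu.ne, mem_erase.mpr ⟨(hmu.trans huv).ne, hm.1⟩⟩
    have hnot : ¬ ∀ w ∈ r, u < w := fun h => lt_asymm hmu (h m hmr)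
    have hE : v :: u :: r ∈ enumerations s := cons_mem_enumerations.mpr
      ⟨mem_of_mem_erase hv, cons_mem_enumerations.mpr
        ⟨mem_erase.mpr ⟨huv.ne, mem_of_mem_erase hu⟩, hr⟩⟩
    have hlen := length_of_mem_enumerations hE
    rw [List.length_cons, List.length_cons, length_of_mem_enumerations hr] at hlen
    simp only [mem_downUpLists, isDownUp_cons_cons, suffixMinCount_cons_cons r huv,
      if_neg hnot, hE, hr, huv, true_and, ← hlen, and_assoc]
    exact and_congr_right fun _ => and_congr_right fun _ => by omega
  · simp only [mem_downUpLists, isDownUp_cons_cons, huv, false_and, and_false]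

theorem eq_of_cons_cons_mem_downUpLists_zero (hm : IsLeast (s : Set α) m)
    (h : v :: u :: r ∈ downUpLists s 0) : u = m := by
  obtain ⟨hE, hdu, hc⟩ := mem_downUpLists.mp h
  obtain ⟨huv, -, hr⟩ := isDownUp_cons_cons.mp hdu
  have hmu : m ≤ u := hm.2 (by simpa using (mem_iff_of_mem_enumerations hE (a := u)).mp (by simp))
  by_contra hum
  have hmr : m ∈ r := by
    have := (mem_iff_of_mem_enumerations hE).mpr hm.1
    simp only [List.mem_cons] at this
    rcases this with h | h | h
    · exact absurd (h ▸ hmu) huv.not_ge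
    · exact absurd h.symm hum
    · exact h
  have hlen := length_of_mem_enumerations hE
  rw [suffixMinCount_cons_cons r huv,
    if_neg fun h => lt_asymm (lt_of_le_of_ne hmu (Ne.symm hum)) (h m hmr), ← hlen] at hc
  simp only [List.length_cons] at hc
  have := two_mul_suffixMinCount_le hr ⟨suffixMinCount r - 1, by omega⟩
  omega

theorem card_filter_downUpLists (hm : IsLeast (s : Set α) m) (hs : 2 ≤ #s)
    (P : List α → Prop) [DecidablePred P] :
    #{l ∈ downUpLists s k | P l} =
      ∑ v ∈ s.erase m, #{r ∈ downUpLists ((s.erase v).erase m) k | P (v :: m :: r)} +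
      ∑ u ∈ s.erase m, ∑ v ∈ s.erase u, #{r ∈ enumerations ((s.erase v).erase u) |
        v :: u :: r ∈ downUpLists s k ∧ P (v :: u :: r)} := by
  have hfilter :
      {l ∈ downUpLists s k | P l} = {l ∈ enumerations s | l ∈ downUpLists s k ∧ P l} := by
    ext l
    simp only [mem_filter]
    exact ⟨fun h => ⟨(mem_downUpLists.mp h.1).1, h⟩, fun h => h.2⟩
  rw [hfilter, card_filter_enumerations_of_two_le hs, ← add_sum_erase _ _ hm.1]
  congr 1
  refine sum_congr rfl fun v hv => congrArg card (ext fun r => ?_)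
  simp only [mem_filter]
  constructor
  · rintro ⟨hr, h, hP⟩
    exact ⟨(cons_cons_min_mem_downUpLists_iff hm hv hr).mp h, hP⟩
  · rintro ⟨h, hP⟩
    have hr := (mem_downUpLists.mp h).1
    exact ⟨hr, (cons_cons_min_mem_downUpLists_iff hm hv hr).mpr h, hP⟩

theorem card_filter_head_downUpLists_zero (hm : IsLeast (s : Set α) m) (hs : 2 ≤ #s)
    (Q : α → Prop) [DecidablePred Q] :
    #{l ∈ downUpLists s 0 | ∀ w ∈ l.head?, Q w} =
      ∑ v ∈ s.erase m with Q v, #(downUpLists ((s.erase v).erase m) 0) := by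
  rw [card_filter_downUpLists hm hs, sum_filter]
  have hnonmin : ∀ u ∈ s.erase m, ∀ v ∈ s.erase u, #{r ∈ enumerations ((s.erase v).erase u) |
      v :: u :: r ∈ downUpLists s 0 ∧ ∀ w ∈ (v :: u :: r).head?, Q w} = 0 := by
    refine fun u hu v _ => card_eq_zero.mpr (filter_eq_empty_iff.mpr fun r _ h => ?_)
    exact ne_of_mem_erase hu (eq_of_cons_cons_mem_downUpLists_zero hm h.1)
  rw [sum_eq_zero fun u hu => sum_eq_zero (hnonmin u hu), add_zero]
  refine sum_congr rfl fun v _ => ?_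
  split_ifs with hQ <;> simp [hQ]

theorem card_downUpLists_zero :
    ∀ (M : ℕ) {s : Finset α}, #s = 2 * M → #(downUpLists s 0) = oddDF M
  | 0, s, hs => by
    rw [card_eq_zero.mp hs, downUpLists_empty, card_singleton, oddDF, prod_range_zero]
  | M + 1, s, hs => by
    have hne : s.Nonempty := card_pos.mp (by omega)
    have hstep := card_filter_head_downUpLists_zero (s.isLeast_min' hne) (by omega) fun _ => True
    simp only [implies_true, filter_true] at hstep
    rw [hstep, sum_congr rfl fun v hv => card_downUpLists_zero M (s := (s.erase v).erase _) ?_,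
      sum_const, card_erase_of_mem (s.min'_mem hne), hs, smul_eq_mul, oddDF_succ,
      show 2 * (M + 1) - 1 = 2 * M + 1 by omega]
    · rw [card_erase_of_mem (mem_erase.mpr ⟨(ne_of_mem_erase hv).symm, s.min'_mem hne⟩),
        card_erase_of_mem (mem_of_mem_erase hv), hs]
      omega

theorem card_filter_head_downUpLists_zero_of_lt {b : α} {M : ℕ} (hm : IsLeast (s : Set α) m)
    (hmb : m < b) (hs : #s = 2 * (M + 1)) :
    #{l ∈ downUpLists s 0 | ∀ w ∈ l.head?, b < w} = #{x ∈ s | b < x} * oddDF M := by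
  rw [card_filter_head_downUpLists_zero hm (by omega),
    sum_congr rfl fun v hv => card_downUpLists_zero M ?_, sum_const, smul_eq_mul, filter_erase,
    erase_eq_of_notMem (by simp [hmb.le])]
  have hv' := mem_of_mem_filter _ hv
  rw [card_erase_of_mem (mem_erase.mpr ⟨(ne_of_mem_erase hv').symm, hm.1⟩),
    card_erase_of_mem (mem_of_mem_erase hv'), hs]
  omega

theorem card_filter_cons_cons_mem_downUpLists_one {M : ℕ} (hm : IsLeast (s : Set α) m)
    (hs : #s = 2 * (M + 2)) (hu : u ∈ s.erase m) (hv : v ∈ s.erase u) :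
    #{r ∈ enumerations ((s.erase v).erase u) | v :: u :: r ∈ downUpLists s 1} =
      if u < v then (#{x ∈ s | u < x} - 1) * oddDF M else 0 := by
  have hiff := fun r (hr : r ∈ enumerations ((s.erase v).erase u)) =>
    cons_cons_mem_downUpLists_succ_iff (k := 0) hm hu hv hr
  split_ifs with huv
  · have hmu := hm.lt_of_mem_erase hu
    have ht : IsLeast (((s.erase v).erase u : Finset α) : Set α) m := ⟨mem_erase.mpr
      ⟨hmu.ne, mem_erase.mpr ⟨(hmu.trans huv).ne, hm.1⟩⟩, fun x hx => hm.2 (by simp_all)⟩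
    have htc : #((s.erase v).erase u) = 2 * (M + 1) := by
      rw [card_erase_of_mem (mem_erase.mpr ⟨huv.ne, mem_of_mem_erase hu⟩),
        card_erase_of_mem (mem_of_mem_erase hv), hs]
      omega
    have hfilter : {r ∈ enumerations ((s.erase v).erase u) | v :: u :: r ∈ downUpLists s 1} =
        {r ∈ downUpLists ((s.erase v).erase u) 0 | ∀ w ∈ r.head?, u < w} := by
      ext r
      simp only [mem_filter]
      constructor
      · rintro ⟨hr, h⟩
        obtain ⟨-, hhead, hD⟩ := (hiff r hr).mp h
        exact ⟨hD, hhead⟩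
      · rintro ⟨hD, hhead⟩
        have hr := (mem_downUpLists.mp hD).1
        exact ⟨hr, (hiff r hr).mpr ⟨huv, hhead, hD⟩⟩
    rw [hfilter, card_filter_head_downUpLists_zero_of_lt ht hmu htc, filter_erase, filter_erase,
      erase_eq_of_notMem (by simp), card_erase_of_mem (by simp [mem_of_mem_erase hv, huv])]
  · refine card_eq_zero.mpr (filter_eq_empty_iff.mpr fun r hr h => huv ?_)
    exact ((hiff r hr).mp h).1

theorem card_downUpLists_one_eq_add {M : ℕ} (hm : IsLeast (s : Set α) m) (hs : #s = 2 * (M + 2)) :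
    #(downUpLists s 1) = ∑ v ∈ s.erase m, #(downUpLists ((s.erase v).erase m) 1) +
      ∑ u ∈ s.erase m, #{x ∈ s.erase m | u < x} * (#{x ∈ s.erase m | u < x} - 1) * oddDF M := by
  have hsplit := card_filter_downUpLists hm (by omega) (k := 1) fun _ => True
  simp only [filter_true, and_true] at hsplit
  rw [hsplit]
  congr 1
  refine sum_congr rfl fun u hu => ?_
  have habove : {x ∈ s.erase m | u < x} = {x ∈ s | u < x} := by
    rw [filter_erase, erase_eq_of_notMem (by simp [(hm.lt_of_mem_erase hu).le])]
  rw [habove, sum_congr rfl fun v hv => card_filter_cons_cons_mem_downUpLists_one hm hs hu hv,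
    ← sum_filter, sum_const, smul_eq_mul, filter_erase, erase_eq_of_notMem (by simp), mul_assoc]

theorem card_downUpLists_one :
    ∀ (M : ℕ) {s : Finset α}, #s = 2 * M → (#(downUpLists s 1) : ℚ) = 2 / 3 * M.choose 2 * oddDF M
  | 0, s, hs | 1, s, hs => by simp [downUpLists_one_eq_empty (s := s) (by omega)]
  | M + 2, s, hs => by
    have hne : s.Nonempty := card_pos.mp (by omega)
    have hm := s.isLeast_min' hne
    have hcard : #(s.erase (s.min' hne)) = 2 * M + 3 := by
      rw [card_erase_of_mem hm.1, hs]
      omega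
    have hrest : ∀ v ∈ s.erase (s.min' hne), #((s.erase v).erase (s.min' hne)) = 2 * (M + 1) := by
      intro v hv
      rw [card_erase_of_mem (mem_erase.mpr ⟨(ne_of_mem_erase hv).symm, hm.1⟩),
        card_erase_of_mem (mem_of_mem_erase hv), hs]
      omega
    rw [card_downUpLists_one_eq_add hm hs,
      sum_card_filter_lt _ fun c => c * (c - 1) * oddDF M, ← sum_mul, hcard, Nat.cast_add,
      Nat.cast_sum, sum_congr rfl fun v hv => card_downUpLists_one (M + 1) (hrest v hv),
      sum_const, hcard, nsmul_eq_mul, Nat.cast_mul, Nat.cast_sum, sum_range_mul_pred,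
      Nat.cast_choose_two, Nat.cast_choose_two]
    simp only [oddDF_succ]
    push_cast
    ring

end DownUp

section Permutations

open scoped Classical

variable {N : ℕ}

theorem matches1_iff (hN : Even N) {σ : Equiv.Perm (Fin N)} (hσ : UpDown σ) (i : Fin N) :
    Matches1 σ i ↔ ∀ j < i, σ i < σ j := by
  constructor
  · rintro ⟨-, hmin⟩ j hj
    exact lt_of_le_of_ne (not_lt.mp fun h => hmin ⟨j, hj, h⟩) (σ.injective.ne hj.ne')
  refine fun hmin => ⟨?_, fun ⟨j, hj, h⟩ => lt_asymm h (hmin j hj)⟩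
  obtain ⟨i, hi⟩ := i
  obtain ⟨k, rfl | rfl⟩ := Nat.even_or_odd' i
  · obtain ⟨t, rfl⟩ := hN
    have hup := hσ ⟨2 * k, hi⟩ (by simp; omega)
    rw [if_pos (even_two_mul k)] at hup
    exact ⟨_, Fin.lt_def.mpr (Nat.lt_succ_self _), hup⟩
  · have hup := hσ ⟨2 * k, by omega⟩ hi
    rw [if_pos (even_two_mul k)] at hup
    exact absurd (hmin _ (Fin.lt_def.mpr (Nat.lt_succ_self _))) (lt_asymm hup)

theorem upDown_iff_isDownUp (hN : Even N) (σ : Equiv.Perm (Fin N)) :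
    UpDown σ ↔ IsDownUp (List.ofFn fun i => σ i.rev) := by
  have hN2 := Nat.even_iff.mp hN
  have hpar : ∀ i, i + 1 < N → (Even (N - 2 - i) ↔ Even i) := fun i _ => by
    simp only [Nat.even_iff]
    omega
  simp only [UpDown, IsDownUp, List.length_ofFn, List.getElem_ofFn]
  constructor
  · intro H i hi
    have h := H ⟨N - 2 - i, by omega⟩ (by simp; omega)
    have e1 : (⟨i + 1, hi⟩ : Fin N).rev = ⟨N - 2 - i, by omega⟩ := Fin.ext (by simp; omega)
    have e0 : (⟨i, by omega⟩ : Fin N).rev = ⟨N - 2 - i + 1, by omega⟩ := Fin.ext (by simp; omega)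
    simp only [e1, e0, ← hpar i hi]
    exact h
  · rintro H ⟨i, -⟩ (hi : i + 1 < N)
    have h := H (N - 2 - i) (by omega)
    have e1 : (⟨N - 2 - i + 1, by omega⟩ : Fin N).rev = ⟨i, by omega⟩ := Fin.ext (by simp; omega)
    have e0 : (⟨N - 2 - i, by omega⟩ : Fin N).rev = ⟨i + 1, hi⟩ := Fin.ext (by simp; omega)
    simp only [e1, e0, hpar i hi] at h
    exact h

theorem mmp1_eq_suffixMinCount (hN : Even N) {σ : Equiv.Perm (Fin N)} (hσ : UpDown σ) :
    mmp1 σ = suffixMinCount (List.ofFn fun i => σ i.rev) := by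
  calc mmp1 σ = #{i | ∀ j < i, σ i < σ j} := by
        rw [mmp1, ← Set.ncard_coe_finset]
        congr 1
        ext i
        simp [matches1_iff hN hσ]
    _ = #{i | ∀ j, i < j → σ i.rev < σ j.rev} := card_equiv Fin.revPerm fun i => by
        simp only [mem_filter, mem_univ, true_and, Fin.revPerm_apply, Fin.rev_rev]
        refine ⟨fun h j hj => h _ ?_, fun h j hj => by simpa using h j.rev (Fin.rev_lt_rev.mpr hj)⟩
        simpa using Fin.rev_lt_rev.mpr hj
    _ = suffixMinCount (List.ofFn fun i => σ i.rev) := (suffixMinCount_ofFn _).symm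

theorem ncard_setOf_upDown (hN : Even N) (P : ℕ → Prop) [DecidablePred P] :
    {σ : Equiv.Perm (Fin N) | UpDown σ ∧ P (mmp1 σ)}.ncard =
      #{l ∈ enumerations (univ : Finset (Fin N)) | IsDownUp l ∧ P (suffixMinCount l)} := by
  rw [← Set.ncard_coe_finset]
  refine Set.ncard_congr (fun σ _ => List.ofFn fun i => σ i.rev) ?_ ?_ ?_
  · rintro σ ⟨hσ, hP⟩
    refine mem_filter.mpr ⟨mem_enumerations_iff_nodup.mpr ⟨?_, fun a => ?_⟩,
      (upDown_iff_isDownUp hN σ).mp hσ, mmp1_eq_suffixMinCount hN hσ ▸ hP⟩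
    · exact List.nodup_ofFn.mpr (σ.injective.comp Fin.rev_injective)
    · exact iff_of_true (List.mem_ofFn.mpr ⟨(σ.symm a).rev, by simp⟩) (mem_univ a)
  · intro σ τ _ _ h
    exact Equiv.ext fun i => by simpa using congrFun (List.ofFn_injective h) i.rev
  · intro l hl
    obtain ⟨hE, hdu, hP⟩ := mem_filter.mp hl
    have hnd := (mem_enumerations_iff_nodup.mp hE).1
    have hlen : l.length = N := by rw [length_of_mem_enumerations hE, card_univ, Fintype.card_fin]
    let g : Fin N → Fin N := fun i => l[(i.rev : ℕ)]
    have hg : Function.Injective g := fun i j h =>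
      Fin.rev_injective (Fin.ext ((hnd.getElem_inj_iff).mp h))
    set σ := Equiv.ofBijective g (Finite.injective_iff_bijective.mp hg)
    have hσl : (List.ofFn fun i => σ i.rev) = l :=
      List.ext_getElem (by simp [hlen]) fun k _ _ => by
        simp only [List.getElem_ofFn, σ, Equiv.ofBijective_apply, g, Fin.rev_rev]
    have hσ : UpDown σ := (upDown_iff_isDownUp hN σ).mpr (hσl ▸ hdu)
    exact ⟨σ, ⟨hσ, by rwa [mmp1_eq_suffixMinCount hN hσ, hσl]⟩, hσl⟩

end Permutations

theorem stmt19 (n : ℕ) (hn : 2 ≤ n) :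
    ({σ : Equiv.Perm (Fin (2*n)) | UpDown σ ∧ mmp1 σ = n-1}.ncard : ℚ)
      = 2/3 * (n.choose 2 : ℚ) * (oddDF n : ℚ) := by
  classical
  have hfilter : {l ∈ enumerations (univ : Finset (Fin (2 * n))) |
      IsDownUp l ∧ suffixMinCount l = n - 1} = downUpLists univ 1 := by
    refine filter_congr fun l _ => and_congr_right fun _ => ?_
    rw [card_univ, Fintype.card_fin]
    omega
  rw [ncard_setOf_upDown (even_two_mul n) (· = n - 1), hfilter,
    card_downUpLists_one n (by rw [card_univ, Fintype.card_fin])]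
end
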